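/- arXiv:2301.10661 — 2 statements merged into one kernel-verified Lean document; each statement's English description precedes it below -/
import Mathlib

section
/- Let p be an odd prime, φ the quadratic character of F_p, and χ any multiplicative character of F_p. Then g(φχ̄)·g(χ̄) = g(φ)·χ̄(1/4)·g(χ̄²), i.e., the Hasse–Davenport product relation with m = 2. -/
open Finset

noncomputable def gsum (p : ℕ) [Fact p.Prime] (ζ : ℂ) (χ : MulChar (ZMod p) ℂ) : ℂ :=
  ∑ x : ZMod p, χ x * ζ ^ x.val

/-!
Write `Ψ = χ⁻¹` and `φ` for the quadratic character. Substituting `x = (1 + s) / 2` in the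
Jacobi sum gives `J(Ψ, Ψ) = Ψ(1/4) ∑ₛ Ψ(1 - s²)`, and since `a` has `1 + φ(a)` square roots the
right side is `Ψ(1/4) J(φ, Ψ)`. Feeding this into `g(χ₁) g(χ₂) = g(χ₁χ₂) J(χ₁, χ₂)` for the pairs
`(Ψ, Ψ)` and `(φ, Ψ)` and cancelling `g(Ψ) ≠ 0` proves the relation when `Ψ² ≠ 1`. The only
characters with `Ψ² = 1` are `1` and `φ`, for which it is immediate.
-/

section FiniteField

variable {F R : Type*} [Field F] [Fintype F] [CommRing R]

theorem jacobiSum_self_eq_mul_sum_one_sub_sq (hF : ringChar F ≠ 2) (Ψ : MulChar F R) :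
    jacobiSum Ψ Ψ = Ψ (4 : F)⁻¹ * ∑ s : F, Ψ (1 - s ^ 2) := by
  have h2 : (2 : F) ≠ 0 := Ring.two_ne_zero hF
  let e : F ≃ F := (Equiv.addLeft 1).trans (Equiv.mulRight₀ 2⁻¹ (inv_ne_zero h2))
  rw [jacobiSum, ← e.sum_comp, mul_sum]
  refine sum_congr rfl fun s _ => ?_
  rw [← map_mul, ← map_mul]
  congr 1
  change (1 + s) * 2⁻¹ * (1 - (1 + s) * 2⁻¹) = 4⁻¹ * (1 - s ^ 2)
  rw [show (4 : F) = 2 * 2 by norm_num]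
  field_simp
  ring

variable [DecidableEq F]

theorem sum_comp_sq_eq_sum_quadraticChar_add_one (hF : ringChar F ≠ 2) (f : F → R) :
    ∑ s : F, f (s ^ 2) = ∑ a : F, ((quadraticChar F a : R) + 1) * f a := by
  rw [← sum_fiberwise univ (fun s : F => s ^ 2)]
  refine sum_congr rfl fun a _ => ?_
  have hcard : (#{s : F | s ^ 2 = a} : R) = (quadraticChar F a : R) + 1 := by
    have h := quadraticChar_card_sqrts hF a
    rw [Set.toFinset_ofPred] at h
    exact_mod_cast congrArg (Int.cast : ℤ → R) h
  rw [sum_congr rfl fun s hs => congrArg f (mem_filter.mp hs).2, sum_const, nsmul_eq_mul, hcard]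

variable [IsDomain R]

theorem jacobiSum_self_eq_mul_jacobiSum_quadraticChar (hF : ringChar F ≠ 2)
    {Ψ : MulChar F R} (hΨ : Ψ ≠ 1) :
    jacobiSum Ψ Ψ =
      Ψ (4 : F)⁻¹ * jacobiSum ((quadraticChar F).ringHomComp (Int.castRingHom R)) Ψ := by
  have hshift : ∑ a : F, Ψ (1 - a) = 0 :=
    ((Equiv.subLeft 1).sum_comp Ψ).trans (MulChar.sum_eq_zero_of_ne_one hΨ)
  rw [jacobiSum_self_eq_mul_sum_one_sub_sq hF, sum_comp_sq_eq_sum_quadraticChar_add_one hF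
    (fun a => Ψ (1 - a))]
  simp only [add_mul, one_mul, sum_add_distrib, hshift, add_zero]
  rfl

theorem MulChar.eq_quadraticChar_of_sq_eq_one (hF : ringChar F ≠ 2)
    {χ : MulChar F R} (hχ : χ ^ 2 = 1) (hχ1 : χ ≠ 1) :
    χ = (quadraticChar F).ringHomComp (Int.castRingHom R) := by
  obtain ⟨g, hg⟩ := IsCyclic.exists_generator (α := Fˣ)
  have hχg : χ g = -1 := by
    have hsq : χ g ^ 2 = 1 := by
      rw [← MulChar.pow_apply' _ two_ne_zero, hχ, MulChar.one_apply g.isUnit]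
    refine (sq_eq_one_iff.mp hsq).resolve_left fun h => hχ1 ?_
    rwa [MulChar.eq_iff hg, MulChar.one_apply g.isUnit]
  have hquad : quadraticChar F g = -1 := by
    refine (quadraticChar_dichotomy g.ne_zero).resolve_left fun h => quadraticChar_ne_one hF ?_
    rwa [MulChar.eq_iff hg, MulChar.one_apply g.isUnit]
  rw [MulChar.eq_iff hg, hχg, MulChar.ringHomComp_apply, hquad]
  simp

theorem gaussSum_quadraticChar_mul_mul_gaussSum_of_sq_ne_one (hF : ringChar F ≠ 2)
    (hcard : (Fintype.card F : R) ≠ 0) {ψ : AddChar F R} (hψ : ψ.IsPrimitive)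
    {Ψ : MulChar F R} (hΨ : Ψ ^ 2 ≠ 1) :
    gaussSum ((quadraticChar F).ringHomComp (Int.castRingHom R) * Ψ) ψ * gaussSum Ψ ψ =
      gaussSum ((quadraticChar F).ringHomComp (Int.castRingHom R)) ψ * Ψ (4 : F)⁻¹ *
        gaussSum (Ψ ^ 2) ψ := by
  set φ := (quadraticChar F).ringHomComp (Int.castRingHom R)
  have hφ : φ ^ 2 = 1 := ((quadraticChar_isQuadratic F).comp _).sq_eq_one
  have hΨ1 : Ψ ≠ 1 := by rintro rfl; exact hΨ (one_pow 2)
  have hφΨ : φ * Ψ ≠ 1 := by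
    intro h
    rw [eq_inv_of_mul_eq_one_right h, inv_pow, hφ, inv_one] at hΨ
    exact hΨ rfl
  have hJφΨ := jacobiSum_mul_nontrivial hφΨ ψ
  have hJΨΨ :
      gaussSum (Ψ ^ 2) ψ * (Ψ (4 : F)⁻¹ * jacobiSum φ Ψ) = gaussSum Ψ ψ * gaussSum Ψ ψ := by
    rw [← jacobiSum_self_eq_mul_jacobiSum_quadraticChar hF hΨ1, sq]
    exact jacobiSum_mul_nontrivial (sq Ψ ▸ hΨ) ψ
  refine mul_right_cancel₀ (gaussSum_ne_zero_of_nontrivial hcard hΨ1 hψ) ?_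
  linear_combination gaussSum (φ * Ψ) ψ * hJΨΨ.symm + Ψ (4 : F)⁻¹ * gaussSum (Ψ ^ 2) ψ * hJφΨ

theorem gaussSum_quadraticChar_mul_mul_gaussSum (hF : ringChar F ≠ 2)
    (hcard : (Fintype.card F : R) ≠ 0) {ψ : AddChar F R} (hψ : ψ.IsPrimitive) (Ψ : MulChar F R) :
    gaussSum ((quadraticChar F).ringHomComp (Int.castRingHom R) * Ψ) ψ * gaussSum Ψ ψ =
      gaussSum ((quadraticChar F).ringHomComp (Int.castRingHom R)) ψ * Ψ (4 : F)⁻¹ *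
        gaussSum (Ψ ^ 2) ψ := by
  by_cases hΨ : Ψ ^ 2 = 1
  swap
  · exact gaussSum_quadraticChar_mul_mul_gaussSum_of_sq_ne_one hF hcard hψ hΨ
  have h2 : (2 : F) ≠ 0 := Ring.two_ne_zero hF
  have h4 : (4 : F)⁻¹ = 2⁻¹ ^ 2 := by rw [inv_pow]; norm_num
  by_cases hΨ1 : Ψ = 1
  · subst hΨ1
    rw [MulChar.one_apply (h4 ▸ (inv_ne_zero h2).isUnit.pow 2), mul_one, one_pow, mul_one]
  · rw [MulChar.eq_quadraticChar_of_sq_eq_one hF hΨ hΨ1, ← sq,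
      ((quadraticChar_isQuadratic F).comp _).sq_eq_one, h4, MulChar.ringHomComp_apply,
      quadraticChar_sq_one' (inv_ne_zero h2)]
    simp only [eq_intCast, Int.cast_one, mul_one]
    exact mul_comm _ _

end FiniteField

theorem gsum_eq_gaussSum_zmodChar {p : ℕ} [Fact p.Prime] {ζ : ℂ} (hζ : ζ ^ p = 1)
    (χ : MulChar (ZMod p) ℂ) : gsum p ζ χ = gaussSum χ (AddChar.zmodChar p hζ) := by
  refine sum_congr rfl fun x _ => ?_
  rw [AddChar.zmodChar_apply]

theorem hasse_davenport_m2 (p : ℕ) [Fact p.Prime] (hp : Odd p) (ζ : ℂ)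
    (hζ : IsPrimitiveRoot ζ p) (χ : MulChar (ZMod p) ℂ) :
    gsum p ζ ((quadraticChar (ZMod p)).ringHomComp (Int.castRingHom ℂ) * χ⁻¹) *
        gsum p ζ χ⁻¹ =
      gsum p ζ ((quadraticChar (ZMod p)).ringHomComp (Int.castRingHom ℂ)) *
        χ⁻¹ ((4 : ZMod p)⁻¹) * gsum p ζ (χ⁻¹ ^ 2) := by
  have hchar : ringChar (ZMod p) ≠ 2 := by
    rw [ZMod.ringChar_zmod_n]
    rintro rfl
    exact Nat.not_odd_iff_even.mpr even_two hp
  have hcard : (Fintype.card (ZMod p) : ℂ) ≠ 0 := by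
    rw [ZMod.card]
    exact Nat.cast_ne_zero.mpr (Fact.out : p.Prime).ne_zero
  simp only [gsum_eq_gaussSum_zmodChar hζ.pow_eq_one]
  exact gaussSum_quadraticChar_mul_mul_gaussSum hchar hcard
    (AddChar.zmodChar_primitive_of_primitive_root p hζ) χ⁻¹
end

section
/- Let n ≥ 1 be a positive integer and p an odd prime with p ∤ 3n(3n-2). Let φ be the quadratic character of F_p. For x ∈ F_p^×, set α = (-1)^n (3n-2)^{3n-2} / ((3n)^{3n} x) ∈ F_p, and let f(y) = y^{3n} - 2y^{3n-1} + y^{3n-2} - (-1)^n·4α ∈ F_p[y]. Define C(n,x) := Σ_{χ} g(χ^{3n}) g(φχ̄) g(χ̄) g(χ̄^{3n-2}) χ(α), where the sum runs over all multiplicative characters χ of F_p. If r denotes the number of distinct roots of f in F_p, then C(n,x) + (p-1)²·g(φ)·(1 + φ(α)·δ(φⁿ)) = r·p·(p-1)·g(φ), where δ(φⁿ) = 1 if φⁿ is trivial (i.e. n is even) and 0 otherwise. -/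
open Finset
set_option maxRecDepth 8000
open scoped Classical

section aux
variable {p : ℕ} [Fact p.Prime] {φ : MulChar (ZMod p) ℂ}

lemma phi_sq (hφ : φ = (quadraticChar (ZMod p)).ringHomComp (Int.castRingHom ℂ))
    {u : ZMod p} (hu : u ≠ 0) : φ u * φ u = 1 := by
  subst hφ
  simp only [MulChar.ringHomComp_apply]
  rw [show ∀ z : ℤ, (Int.castRingHom ℂ) z = (z : ℂ) from fun z => rfl,
    ← Int.cast_mul, ← sq, quadraticChar_sq_one hu, Int.cast_one]

lemma phi_inv (hφ : φ = (quadraticChar (ZMod p)).ringHomComp (Int.castRingHom ℂ))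
    (u : ZMod p) : φ u⁻¹ = φ u := by
  by_cases hu : u = 0
  · rw [hu, inv_zero]
  · calc φ u⁻¹ = φ u⁻¹ * (φ u * φ u) := by rw [phi_sq hφ hu, mul_one]
    _ = φ (u⁻¹ * u) * φ u := by rw [map_mul]; ring
    _ = φ u := by rw [inv_mul_cancel₀ hu, map_one, one_mul]

lemma p_ne_two (hp : Odd p) : p ≠ 2 := by
  rintro rfl; exact (Nat.not_odd_iff_even.mpr (by norm_num)) hp

lemma ringChar_ne_two (hp : Odd p) : ringChar (ZMod p) ≠ 2 := by
  rw [ZMod.ringChar_zmod_n]; exact p_ne_two hp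

lemma phi_ne_one (hp : Odd p)
    (hφ : φ = (quadraticChar (ZMod p)).ringHomComp (Int.castRingHom ℂ)) : φ ≠ 1 := by
  subst hφ
  rw [MulChar.ringHomComp_ne_one_iff Int.cast_injective]
  exact quadraticChar_ne_one (ringChar_ne_two hp)

lemma phi_sum_zero (hp : Odd p)
    (hφ : φ = (quadraticChar (ZMod p)).ringHomComp (Int.castRingHom ℂ)) :
    ∑ a : ZMod p, φ a = 0 :=
  MulChar.sum_eq_zero_of_ne_one (phi_ne_one hp hφ)

lemma card_ne_zero : ((univ.filter fun a : ZMod p => a ≠ 0).card : ℂ) = (p : ℂ) - 1 := by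
  rw [filter_ne', card_erase_of_mem (mem_univ 0), card_univ, ZMod.card]
  have h1 : 1 ≤ p := (Fact.out : p.Prime).one_lt.le
  push_cast [Nat.cast_sub h1]; ring

lemma sum_ind_units : ∑ a : ZMod p, (if a = 0 then (0:ℂ) else 1) = (p : ℂ) - 1 := by
  rw [show (fun a : ZMod p => if a = 0 then (0:ℂ) else 1) = (fun a => if a ≠ 0 then (1:ℂ) else 0) from funext fun a => by by_cases h : a = 0 <;> simp [h]]
  rw [Finset.sum_ite, Finset.sum_const, Finset.sum_const, ← card_ne_zero (p := p)]
  simp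

end aux

section aux2
variable {p : ℕ} [Fact p.Prime] {φ : MulChar (ZMod p) ℂ} {ζ : ℂ}

lemma zeta_mod (hζ : IsPrimitiveRoot ζ p) (m : ℕ) : ζ ^ (m % p) = ζ ^ m := by
  conv_rhs => rw [← Nat.div_add_mod m p]
  rw [pow_add, pow_mul, hζ.pow_eq_one, one_pow, one_mul]

lemma e_add (hζ : IsPrimitiveRoot ζ p) (x y : ZMod p) :
    ζ ^ (x + y).val = ζ ^ x.val * ζ ^ y.val := by
  have : NeZero p := ⟨(Fact.out : p.Prime).ne_zero⟩
  rw [ZMod.val_add, zeta_mod hζ, pow_add]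

-- twisted Gauss sum
lemma gauss_twist (hφ : φ = (quadraticChar (ZMod p)).ringHomComp (Int.castRingHom ℂ))
    (hp : Odd p) (s : ZMod p) :
    ∑ a : ZMod p, φ a * ζ ^ (a * s).val =
      φ s * ∑ a : ZMod p, φ a * ζ ^ a.val := by
  by_cases hs : s = 0
  · subst hs
    rw [MulChar.map_zero, zero_mul]
    simp only [mul_zero, ZMod.val_zero, pow_zero, mul_one]
    exact phi_sum_zero hp hφ
  · rw [Finset.mul_sum]
    refine (Fintype.sum_bijective (fun b : ZMod p => b * s⁻¹)
      (Equiv.mulRight₀ s⁻¹ (inv_ne_zero hs)).bijective _ _ fun b => ?_).symm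
    rw [map_mul, phi_inv hφ]
    have : b * s⁻¹ * s = b := by field_simp
    rw [this]; ring

lemma card_sqrts (hp : Odd p)
    (hφ : φ = (quadraticChar (ZMod p)).ringHomComp (Int.castRingHom ℂ)) (a : ZMod p) :
    ((univ.filter fun x : ZMod p => x ^ 2 = a).card : ℂ) = 1 + φ a := by
  have h := quadraticChar_card_sqrts (ringChar_ne_two hp) a
  have h2 : {x : ZMod p | x ^ 2 = a}.toFinset = univ.filter fun x : ZMod p => x ^ 2 = a := by
    ext x; simp
  rw [h2] at h
  have : ((univ.filter fun x : ZMod p => x ^ 2 = a).card : ℂ)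
      = (((univ.filter fun x : ZMod p => x ^ 2 = a).card : ℤ) : ℂ) := by push_cast; rfl
  rw [this, h, hφ]
  push_cast
  simp [MulChar.ringHomComp_apply]
  ring
end aux2
section aux3
variable {p : ℕ} [Fact p.Prime] {φ : MulChar (ZMod p) ℂ}

lemma sum_phi_mul_shift (hp : Odd p)
    (hφ : φ = (quadraticChar (ZMod p)).ringHomComp (Int.castRingHom ℂ)) (D : ZMod p) :
    ∑ a : ZMod p, φ (a * (a + D)) = if D = 0 then ((p : ℂ) - 1) else -1 := by
  split_ifs with hD
  · subst hD
    rw [← sum_ind_units (p := p)]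
    refine Finset.sum_congr rfl fun a _ => ?_
    by_cases ha : a = 0
    · simp [ha, MulChar.map_zero]
    · rw [if_neg ha, add_zero, map_mul, phi_sq hφ ha]
  · have key : ∑ a ∈ univ.filter (· ≠ (0 : ZMod p)), φ (a * (a + D))
        = ∑ t ∈ univ.filter (· ≠ (1 : ZMod p)), φ t := by
      refine Finset.sum_nbij' (fun a => 1 + D * a⁻¹) (fun t => D * (t - 1)⁻¹) ?_ ?_ ?_ ?_ ?_
      · intro a ha
        simp only [mem_filter, mem_univ, true_and] at ha ⊢
        intro h
        exact hD (by
          have := add_left_cancel (a := (1:ZMod p)) (b := D * a⁻¹) (c := 0)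
            (by rw [add_zero]; exact h.symm ▸ rfl)
          exact (mul_eq_zero.mp this).resolve_right (inv_ne_zero ha))
      · intro t ht
        simp only [mem_filter, mem_univ, true_and] at ht ⊢
        exact mul_ne_zero hD (inv_ne_zero (sub_ne_zero.mpr ht))
      · intro a ha
        simp only [mem_filter, mem_univ, true_and] at ha
        field_simp
        rw [add_sub_cancel_left, div_self hD]
      · intro t ht
        simp only [mem_filter, mem_univ, true_and] at ht
        have h1 : t - 1 ≠ 0 := sub_ne_zero.mpr ht
        field_simp
        ring
      · intro a ha
        simp only [mem_filter, mem_univ, true_and] at ha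
        have : a * (a + D) = a ^ 2 * (1 + D * a⁻¹) := by field_simp
        rw [this, map_mul, sq, map_mul, phi_sq hφ ha, one_mul]
    have split0 : ∑ a : ZMod p, φ (a * (a + D))
        = ∑ a ∈ univ.filter (· ≠ (0 : ZMod p)), φ (a * (a + D)) := by
      rw [filter_ne', Finset.sum_erase]
      simp [MulChar.map_zero]
    have split1 : ∑ t ∈ univ.filter (· ≠ (1 : ZMod p)), φ t
        = (∑ t : ZMod p, φ t) - φ 1 := by
      rw [filter_ne', Finset.sum_erase_eq_sub (mem_univ 1)]
    rw [split0, key, split1, phi_sum_zero hp hφ, map_one]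
    ring

lemma quad_sum0 (hp : Odd p)
    (hφ : φ = (quadraticChar (ZMod p)).ringHomComp (Int.castRingHom ℂ)) (D : ZMod p) :
    ∑ c : ZMod p, φ (c ^ 2 + D) = if D = 0 then ((p : ℂ) - 1) else -1 := by
  have step1 : ∑ c : ZMod p, φ (c ^ 2 + D)
      = ∑ a : ZMod p, ((univ.filter fun c : ZMod p => c ^ 2 = a).card : ℂ) * φ (a + D) := by
    rw [← Finset.sum_fiberwise' univ (fun c : ZMod p => c ^ 2) (fun a => φ (a + D))]
    refine Finset.sum_congr rfl fun a _ => ?_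
    rw [Finset.sum_const, nsmul_eq_mul]
  rw [step1]
  have step2 : ∀ a : ZMod p, ((univ.filter fun c : ZMod p => c ^ 2 = a).card : ℂ) * φ (a + D)
      = φ (a + D) + φ a * φ (a + D) := by
    intro a; rw [card_sqrts hp hφ]; ring
  rw [Finset.sum_congr rfl fun a _ => step2 a, Finset.sum_add_distrib]
  have h1 : ∑ a : ZMod p, φ (a + D) = 0 := by
    rw [← phi_sum_zero hp hφ]
    exact Fintype.sum_bijective (· + D) (Equiv.addRight D).bijective _ _ fun a => rfl
  have h2 : ∑ a : ZMod p, φ a * φ (a + D) = ∑ a : ZMod p, φ (a * (a + D)) :=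
    Finset.sum_congr rfl fun a _ => (map_mul φ _ _).symm
  rw [h1, h2, sum_phi_mul_shift hp hφ D, zero_add]

lemma quad_sum (hp : Odd p)
    (hφ : φ = (quadraticChar (ZMod p)).ringHomComp (Int.castRingHom ℂ)) (B C : ZMod p) :
    ∑ c : ZMod p, φ (c ^ 2 + B * c + C)
      = if (1 : ZMod p) * B ^ 2 = 4 * C then ((p : ℂ) - 1) else -1 := by
  have _ : NeZero p := ⟨(Fact.out : p.Prime).ne_zero⟩
  have h2 : (2 : ZMod p) ≠ 0 := by
    intro h
    have h' : ((2 : ℕ) : ZMod p) = 0 := by exact_mod_cast h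
    rw [ZMod.natCast_eq_zero_iff] at h'
    exact p_ne_two hp ((Nat.prime_dvd_prime_iff_eq Fact.out Nat.prime_two).mp h')
  have h4 : (4 : ZMod p) ≠ 0 := by
    intro h
    have : (2 : ZMod p) * 2 = 0 := by linear_combination h
    rcases mul_eq_zero.mp this with h' | h' <;> exact h2 h'
  set i : ZMod p := -(B * 2⁻¹) with hi
  set D : ZMod p := C - B ^ 2 * (2⁻¹) ^ 2 with hDdef
  have key : ∑ c : ZMod p, φ (c ^ 2 + B * c + C) = ∑ c : ZMod p, φ (c ^ 2 + D) := by
    refine (Fintype.sum_bijective (· + i) (Equiv.addRight i).bijective _ _ fun c => ?_).symm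
    have : (c + i) ^ 2 + B * (c + i) + C = c ^ 2 + D := by
      rw [hi, hDdef]; field_simp; ring
    rw [this]
  rw [key, quad_sum0 hp hφ]
  congr 1
  have : D = 0 ↔ (1 : ZMod p) * B ^ 2 = 4 * C := by
    rw [hDdef, sub_eq_zero]
    constructor
    · intro h; rw [one_mul]
      have h22 : (2 : ZMod p) * 2⁻¹ = 1 := mul_inv_cancel₀ h2
      calc B ^ 2 = B ^ 2 * ((2:ZMod p) * 2⁻¹) ^ 2 := by rw [h22]; ring
        _ = 4 * (B ^ 2 * (2⁻¹ : ZMod p) ^ 2) := by ring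
        _ = 4 * C := by rw [← h]
    · intro h
      rw [one_mul] at h
      rw [h]
      have h22 : (2 : ZMod p) * 2⁻¹ = 1 := mul_inv_cancel₀ h2
      calc C = C * ((2:ZMod p) * 2⁻¹) ^ 2 := by rw [h22]; ring
        _ = 4 * C * (2⁻¹:ZMod p) ^ 2 := by ring
  simp [this]
end aux3
section aux4
variable {p : ℕ} [Fact p.Prime] {φ : MulChar (ZMod p) ℂ}

lemma neg_one_ne_zero' : ((-1 : ZMod p)) ≠ 0 := by
  intro h
  have : (1 : ZMod p) = 0 := by linear_combination -h
  exact one_ne_zero this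

lemma count_lemma (hp : Odd p) {n k : ℕ} (hk2 : k + 2 = 3 * n) (hk1 : 1 ≤ k)
    {α : ZMod p} (hα : α ≠ 0) :
    (univ.filter fun y : ZMod p =>
        y ^ (k + 2) - 2 * y ^ (k + 1) + y ^ k - (-1) ^ n * 4 * α = 0).card
      = (univ.filter fun d : ZMod p =>
          d ≠ 0 ∧ (1 + d) ^ 2 = 4 * (α * (d⁻¹) ^ k)).card := by
  have _ : NeZero p := ⟨(Fact.out : p.Prime).ne_zero⟩
  have h2 : (2 : ZMod p) ≠ 0 := by
    intro h
    have h' : ((2 : ℕ) : ZMod p) = 0 := by exact_mod_cast h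
    rw [ZMod.natCast_eq_zero_iff] at h'
    exact p_ne_two hp ((Nat.prime_dvd_prime_iff_eq Fact.out Nat.prime_two).mp h')
  have h4 : (4 : ZMod p) ≠ 0 := by
    intro h
    have h' : (2 : ZMod p) * 2 = 0 := by linear_combination h
    rcases mul_eq_zero.mp h' with h' | h' <;> exact h2 h'
  have hB2 : ((-1 : ZMod p)) ^ n * (-1) ^ n = 1 := by
    rw [← mul_pow]; norm_num
  have hm1 : ((-1 : ZMod p)) ^ k * (-1) ^ n = 1 := by
    rw [← pow_add]
    have hkn : k + n = 2 * (2 * n - 1) := by omega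
    rw [hkn, pow_mul]; norm_num
  have hAB : ((-1 : ZMod p)) ^ k = (-1) ^ n := by
    calc ((-1 : ZMod p)) ^ k = ((-1 : ZMod p)) ^ k * ((-1) ^ n * (-1) ^ n) := by
          rw [hB2, mul_one]
      _ = (((-1 : ZMod p)) ^ k * (-1) ^ n) * (-1) ^ n := by ring
      _ = (-1) ^ n := by rw [hm1, one_mul]
  refine Finset.card_nbij' (fun y => -y) (fun d => -d) ?_ ?_ ?_ ?_
  · intro y hy
    simp only [mem_coe, mem_filter, mem_univ, true_and] at hy ⊢
    have hy0 : y ≠ 0 := by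
      rintro rfl
      rw [zero_pow (by omega), zero_pow (by omega), zero_pow (by omega)] at hy
      have : (-1 : ZMod p) ^ n * 4 * α = 0 := by linear_combination -hy
      rcases mul_eq_zero.mp this with h' | h'
      · rcases mul_eq_zero.mp h' with h'' | h''
        · exact pow_ne_zero n neg_one_ne_zero' h''
        · exact h4 h''
      · exact hα h'
    refine ⟨neg_ne_zero.mpr hy0, ?_⟩
    have hyk : (-y) ^ k ≠ 0 := pow_ne_zero _ (neg_ne_zero.mpr hy0)
    rw [inv_pow, show (4 : ZMod p) * (α * ((-y) ^ k)⁻¹) = 4 * α * ((-y) ^ k)⁻¹ by ring,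
      eq_mul_inv_iff_mul_eq₀ hyk]
    rw [show ((-y : ZMod p)) ^ k = (-1) ^ k * y ^ k from neg_pow y k]
    linear_combination ((-1 : ZMod p)) ^ k * hy + 4 * α * hm1
  · intro d hd
    simp only [mem_coe, mem_filter, mem_univ, true_and] at hd ⊢
    obtain ⟨hd0, hd⟩ := hd
    have hdk : (d : ZMod p) ^ k ≠ 0 := pow_ne_zero _ hd0
    rw [inv_pow, show (4 : ZMod p) * (α * (d ^ k)⁻¹) = 4 * α * (d ^ k)⁻¹ by ring,
      eq_mul_inv_iff_mul_eq₀ hdk] at hd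
    rw [show ((-d : ZMod p)) ^ (k+2) = (-1) ^ (k+2) * d ^ (k+2) from neg_pow d (k+2),
      show ((-d : ZMod p)) ^ (k+1) = (-1) ^ (k+1) * d ^ (k+1) from neg_pow d (k+1),
      show ((-d : ZMod p)) ^ k = (-1) ^ k * d ^ k from neg_pow d k]
    linear_combination ((-1 : ZMod p)) ^ k * hd + 4 * α * hAB
  · intro y _; ring
  · intro d _; ring

lemma sum_phi_alpha_pow (hp : Odd p)
    (hφ : φ = (quadraticChar (ZMod p)).ringHomComp (Int.castRingHom ℂ))
    {n k : ℕ} (hn : 1 ≤ n) (hk2 : k + 2 = 3 * n) {α : ZMod p} :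
    ∑ d : ZMod p, (if d ≠ 0 then φ (α * (d⁻¹) ^ k) else 0)
      = φ α * (if φ ^ n = 1 then (p : ℂ) - 1 else 0) := by
  have step : ∀ d : ZMod p, (if d ≠ 0 then φ (α * (d⁻¹) ^ k) else 0)
      = φ α * (φ ^ n) d := by
    intro d
    by_cases hd : d = 0
    · rw [if_neg (by simp [hd]), hd, MulChar.pow_apply' _ (by omega) 0, MulChar.map_zero,
        zero_pow (show n ≠ 0 by omega), mul_zero]
    · rw [if_pos hd, map_mul, map_pow, phi_inv hφ, MulChar.pow_apply' _ (by omega) d]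
      have hkn : k = n + 2 * (n - 1) := by omega
      rw [hkn, pow_add, pow_mul, pow_two, phi_sq hφ hd, one_pow, mul_one]
  rw [Finset.sum_congr rfl fun d _ => step d, ← Finset.mul_sum]
  congr 1
  split_ifs with h1
  · rw [h1, ← sum_ind_units (p := p)]
    refine Finset.sum_congr rfl fun d _ => ?_
    by_cases hd : d = 0
    · simp [hd, MulChar.map_zero]
    · rw [if_neg hd, MulChar.one_apply (isUnit_iff_ne_zero.mpr hd)]
  · exact MulChar.sum_eq_zero_of_ne_one h1
end aux4
lemma orth_sum {p : ℕ} [Fact p.Prime] (u : ZMod p) :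
    ∑ χ : MulChar (ZMod p) ℂ, χ u = if u = 1 then ((p : ℂ) - 1) else 0 := by
  have : NeZero p := ⟨(Fact.out : p.Prime).ne_zero⟩
  have h := DirichletCharacter.sum_characters_eq ℂ u
  rw [show (∑ χ : MulChar (ZMod p) ℂ, χ u) = ∑ χ : DirichletCharacter ℂ p, χ u from rfl, h,
    Nat.totient_prime Fact.out]
  split_ifs
  · rw [Nat.cast_sub (Fact.out : p.Prime).one_lt.le]; norm_num
  · rfl

lemma sum_ite_ne_zero' {p : ℕ} [Fact p.Prime] (f : ZMod p → ℂ) :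
    ∑ c : ZMod p, (if c ≠ 0 then f c else 0) = (∑ c : ZMod p, f c) - f 0 := by
  rw [← Finset.sum_filter, filter_ne', Finset.sum_erase_eq_sub (mem_univ 0)]

theorem prop_C_value (p : ℕ) [Fact p.Prime] (hp : Odd p) (n : ℕ) (hn : 1 ≤ n)
    (hdvd : ¬ (p ∣ 3 * n * (3 * n - 2))) (ζ : ℂ) (hζ : IsPrimitiveRoot ζ p)
    (x : ZMod p) (hx : x ≠ 0)
    (φ : MulChar (ZMod p) ℂ)
    (hφ : φ = (quadraticChar (ZMod p)).ringHomComp (Int.castRingHom ℂ))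
    (α : ZMod p)
    (hα : α = (-1) ^ n * (3 * n - 2 : ℕ) ^ (3 * n - 2) / ((3 * n : ℕ) ^ (3 * n) * x))
    (r : ℕ)
    (hr : r = (univ.filter fun y : ZMod p =>
      y ^ (3 * n) - 2 * y ^ (3 * n - 1) + y ^ (3 * n - 2) - (-1) ^ n * 4 * α = 0).card) :
    (∑ χ : MulChar (ZMod p) ℂ,
        gsum p ζ (χ ^ (3 * n)) * gsum p ζ (φ * χ⁻¹) * gsum p ζ χ⁻¹ *
          gsum p ζ (χ⁻¹ ^ (3 * n - 2)) * χ α) +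
      ((p : ℂ) - 1) ^ 2 * gsum p ζ φ * (1 + φ α * (if φ ^ n = 1 then 1 else 0)) =
      (r : ℂ) * p * ((p : ℂ) - 1) * gsum p ζ φ := by
  have hNZ : NeZero p := ⟨(Fact.out : p.Prime).ne_zero⟩
  -- basic non-vanishing facts
  have hpn : ¬ p ∣ 3 * n := fun h => hdvd (h.mul_right _)
  have hpk : ¬ p ∣ 3 * n - 2 := fun h => hdvd (h.mul_left _)
  have h3n0 : ((3 * n : ℕ) : ZMod p) ≠ 0 := fun h =>
    hpn ((ZMod.natCast_eq_zero_iff _ _).mp h)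
  have hk0' : ((3 * n - 2 : ℕ) : ZMod p) ≠ 0 := fun h =>
    hpk ((ZMod.natCast_eq_zero_iff _ _).mp h)
  have hα0 : α ≠ 0 := by
    rw [hα]
    apply div_ne_zero
    · exact mul_ne_zero (pow_ne_zero _ (neg_one_ne_zero' (p := p))) (pow_ne_zero _ hk0')
    · exact mul_ne_zero (pow_ne_zero _ h3n0) hx
  -- normalize exponents
  set k := 3 * n - 2 with hk
  have hk1 : 1 ≤ k := by omega
  have hk2 : k + 2 = 3 * n := by omega
  have hkk1 : 3 * n - 1 = k + 1 := by omega
  rw [hkk1] at hr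
  rw [show 3 * n = k + 2 from hk2.symm] at hr ⊢
  -- step 1: expand the product of Gauss sums
  have expand : ∀ χ : MulChar (ZMod p) ℂ,
      gsum p ζ (χ ^ (k + 2)) * gsum p ζ (φ * χ⁻¹) * gsum p ζ χ⁻¹ * gsum p ζ (χ⁻¹ ^ k) * χ α
        = ∑ d : ZMod p, ∑ c : ZMod p, ∑ b : ZMod p, ∑ a : ZMod p,
            (φ b * (ζ ^ a.val * ζ ^ b.val * ζ ^ c.val * ζ ^ d.val)) *
              χ (a ^ (k + 2) * b⁻¹ * c⁻¹ * (d⁻¹) ^ k * α) := by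
    intro χ
    simp only [gsum, Finset.sum_mul, Finset.mul_sum]
    refine Finset.sum_congr rfl fun d _ => ?_
    refine Finset.sum_congr rfl fun c _ => ?_
    refine Finset.sum_congr rfl fun b _ => ?_
    refine Finset.sum_congr rfl fun a _ => ?_
    rw [MulChar.pow_apply' χ (show k + 2 ≠ 0 by omega), MulChar.pow_apply' χ⁻¹ (show k ≠ 0 by omega)]
    simp only [MulChar.mul_apply, MulChar.inv_apply', map_mul, map_pow]
    ring
  -- step 2: orthogonality
  have step2 : (∑ χ : MulChar (ZMod p) ℂ,
        gsum p ζ (χ ^ (k + 2)) * gsum p ζ (φ * χ⁻¹) * gsum p ζ χ⁻¹ *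
          gsum p ζ (χ⁻¹ ^ k) * χ α)
      = ∑ d : ZMod p, ∑ c : ZMod p, ∑ a : ZMod p, ∑ b : ZMod p,
          (φ b * (ζ ^ a.val * ζ ^ b.val * ζ ^ c.val * ζ ^ d.val)) *
            (if a ^ (k + 2) * b⁻¹ * c⁻¹ * (d⁻¹) ^ k * α = 1 then ((p : ℂ) - 1) else 0) := by
    rw [Finset.sum_congr rfl fun χ _ => expand χ]
    rw [Finset.sum_comm]
    refine Finset.sum_congr rfl fun d _ => ?_
    rw [Finset.sum_comm]
    refine Finset.sum_congr rfl fun c _ => ?_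
    have inner : ∀ b : ZMod p, (∑ χ : MulChar (ZMod p) ℂ, ∑ a : ZMod p,
        (φ b * (ζ ^ a.val * ζ ^ b.val * ζ ^ c.val * ζ ^ d.val)) *
          χ (a ^ (k + 2) * b⁻¹ * c⁻¹ * (d⁻¹) ^ k * α))
        = ∑ a : ZMod p,
            (φ b * (ζ ^ a.val * ζ ^ b.val * ζ ^ c.val * ζ ^ d.val)) *
              (if a ^ (k + 2) * b⁻¹ * c⁻¹ * (d⁻¹) ^ k * α = 1 then ((p : ℂ) - 1) else 0) := by
      intro b
      rw [Finset.sum_comm]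
      refine Finset.sum_congr rfl fun a _ => ?_
      rw [← Finset.mul_sum, orth_sum]
    rw [Finset.sum_comm]
    rw [Finset.sum_congr rfl fun b _ => inner b]
    rw [Finset.sum_comm]
  -- step 3: collapse the sum over b
  have step3 : ∀ a c d : ZMod p,
      (∑ b : ZMod p, (φ b * (ζ ^ a.val * ζ ^ b.val * ζ ^ c.val * ζ ^ d.val)) *
          (if a ^ (k + 2) * b⁻¹ * c⁻¹ * (d⁻¹) ^ k * α = 1 then ((p : ℂ) - 1) else 0))
        = if a ≠ 0 ∧ c ≠ 0 ∧ d ≠ 0 then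
            ((p : ℂ) - 1) * (φ (a ^ (k + 2) * c⁻¹ * (d⁻¹) ^ k * α) *
              (ζ ^ a.val * ζ ^ (a ^ (k + 2) * c⁻¹ * (d⁻¹) ^ k * α).val *
                ζ ^ c.val * ζ ^ d.val))
          else 0 := by
    intro a c d
    by_cases h : a ≠ 0 ∧ c ≠ 0 ∧ d ≠ 0
    · obtain ⟨ha, hc, hd⟩ := h
      rw [if_pos ⟨ha, hc, hd⟩]
      set b0 : ZMod p := a ^ (k + 2) * c⁻¹ * (d⁻¹) ^ k * α with hb0
      have hb00 : b0 ≠ 0 :=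
        mul_ne_zero (mul_ne_zero (mul_ne_zero (pow_ne_zero _ ha) (inv_ne_zero hc))
          (pow_ne_zero _ (inv_ne_zero hd))) hα0
      have hcond : ∀ b : ZMod p,
          (a ^ (k + 2) * b⁻¹ * c⁻¹ * (d⁻¹) ^ k * α = 1) ↔ b = b0 := by
        intro b
        constructor
        · intro h1
          have hb : b ≠ 0 := by
            rintro rfl
            rw [inv_zero] at h1
            simp at h1
          refine (calc b0 = (b * b⁻¹) * b0 := by rw [mul_inv_cancel₀ hb, one_mul]
            _ = b * (a ^ (k + 2) * b⁻¹ * c⁻¹ * (d⁻¹) ^ k * α) := by rw [hb0]; ring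
            _ = b * 1 := by rw [h1]
            _ = b := mul_one b).symm
        · rintro rfl
          calc a ^ (k + 2) * b0⁻¹ * c⁻¹ * (d⁻¹) ^ k * α
              = (a ^ (k + 2) * c⁻¹ * (d⁻¹) ^ k * α) * b0⁻¹ := by ring
            _ = b0 * b0⁻¹ := by rw [hb0]
            _ = 1 := mul_inv_cancel₀ hb00
      calc (∑ b : ZMod p, (φ b * (ζ ^ a.val * ζ ^ b.val * ζ ^ c.val * ζ ^ d.val)) *
              (if a ^ (k + 2) * b⁻¹ * c⁻¹ * (d⁻¹) ^ k * α = 1 then ((p : ℂ) - 1) else 0))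
          = ∑ b : ZMod p, (if b = b0 then
              ((p : ℂ) - 1) * (φ b0 * (ζ ^ a.val * ζ ^ b0.val * ζ ^ c.val * ζ ^ d.val))
            else 0) := by
            refine Finset.sum_congr rfl fun b _ => ?_
            by_cases hb : b = b0
            · rw [if_pos ((hcond b).mpr hb), if_pos hb, hb]; ring
            · rw [if_neg (fun hcc => hb ((hcond b).mp hcc)), if_neg hb, mul_zero]
        _ = ((p : ℂ) - 1) * (φ b0 * (ζ ^ a.val * ζ ^ b0.val * ζ ^ c.val * ζ ^ d.val)) := by
            rw [Finset.sum_ite_eq' univ b0]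
            simp
    · rw [if_neg h]
      refine Finset.sum_eq_zero fun b _ => ?_
      have hz : a ^ (k + 2) * b⁻¹ * c⁻¹ * (d⁻¹) ^ k * α = 0 := by
        by_cases ha : a = 0
        · rw [ha, zero_pow (show k + 2 ≠ 0 by omega)]; ring
        by_cases hc : c = 0
        · rw [hc, inv_zero]; ring
        have hd : d = 0 := by tauto
        rw [hd, inv_zero, zero_pow (show k ≠ 0 by omega)]; ring
      rw [if_neg (by rw [hz]; exact zero_ne_one), mul_zero]
  -- step 4: reindex c ↦ a*c, d ↦ a*d and simplify
  have step4 : ∀ a : ZMod p,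
      (∑ c : ZMod p, ∑ d : ZMod p,
        (if a ≠ 0 ∧ c ≠ 0 ∧ d ≠ 0 then
            ((p : ℂ) - 1) * (φ (a ^ (k + 2) * c⁻¹ * (d⁻¹) ^ k * α) *
              (ζ ^ a.val * ζ ^ (a ^ (k + 2) * c⁻¹ * (d⁻¹) ^ k * α).val *
                ζ ^ c.val * ζ ^ d.val))
          else 0))
      = ∑ c : ZMod p, ∑ d : ZMod p,
          (if c ≠ 0 ∧ d ≠ 0 then
            ((p : ℂ) - 1) * (φ (a * (α * c⁻¹ * (d⁻¹) ^ k)) *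
              ζ ^ ((a * (1 + α * c⁻¹ * (d⁻¹) ^ k + c + d)).val))
          else 0) := by
    intro a
    by_cases haz : a = 0
    · subst haz
      rw [Finset.sum_eq_zero fun c _ => Finset.sum_eq_zero fun d _ => by
        rw [if_neg (fun hh => hh.1 rfl)]]
      refine (Finset.sum_eq_zero fun c _ => Finset.sum_eq_zero fun d _ => ?_).symm
      split_ifs with hcd
      · rw [zero_mul, MulChar.map_zero, zero_mul, mul_zero]
      · rfl
    · have reind : ∀ (H : ZMod p → ℂ), ∑ c : ZMod p, H (a * c) = ∑ c : ZMod p, H c :=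
        fun H => Fintype.sum_bijective (a * ·) (mulLeft_bijective₀ a haz) _ _ fun c => rfl
      calc (∑ c : ZMod p, ∑ d : ZMod p,
            (if a ≠ 0 ∧ c ≠ 0 ∧ d ≠ 0 then
                ((p : ℂ) - 1) * (φ (a ^ (k + 2) * c⁻¹ * (d⁻¹) ^ k * α) *
                  (ζ ^ a.val * ζ ^ (a ^ (k + 2) * c⁻¹ * (d⁻¹) ^ k * α).val *
                    ζ ^ c.val * ζ ^ d.val))
              else 0))
          = ∑ c : ZMod p, ∑ d : ZMod p,
            (if a ≠ 0 ∧ (a * c) ≠ 0 ∧ (a * d) ≠ 0 then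
                ((p : ℂ) - 1) * (φ (a ^ (k + 2) * (a * c)⁻¹ * ((a * d)⁻¹) ^ k * α) *
                  (ζ ^ a.val * ζ ^ (a ^ (k + 2) * (a * c)⁻¹ * ((a * d)⁻¹) ^ k * α).val *
                    ζ ^ (a * c).val * ζ ^ (a * d).val))
              else 0) := by
            rw [← reind (fun c => ∑ d : ZMod p, (if a ≠ 0 ∧ c ≠ 0 ∧ d ≠ 0 then
                ((p : ℂ) - 1) * (φ (a ^ (k + 2) * c⁻¹ * (d⁻¹) ^ k * α) *
                  (ζ ^ a.val * ζ ^ (a ^ (k + 2) * c⁻¹ * (d⁻¹) ^ k * α).val *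
                    ζ ^ c.val * ζ ^ d.val))
              else 0))]
            refine Finset.sum_congr rfl fun c _ => ?_
            rw [← reind (fun d => (if a ≠ 0 ∧ (a * c) ≠ 0 ∧ d ≠ 0 then
                ((p : ℂ) - 1) * (φ (a ^ (k + 2) * (a * c)⁻¹ * (d⁻¹) ^ k * α) *
                  (ζ ^ a.val * ζ ^ (a ^ (k + 2) * (a * c)⁻¹ * (d⁻¹) ^ k * α).val *
                    ζ ^ (a * c).val * ζ ^ d.val))
              else 0))]
        _ = ∑ c : ZMod p, ∑ d : ZMod p,
            (if c ≠ 0 ∧ d ≠ 0 then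
              ((p : ℂ) - 1) * (φ (a * (α * c⁻¹ * (d⁻¹) ^ k)) *
                ζ ^ ((a * (1 + α * c⁻¹ * (d⁻¹) ^ k + c + d)).val))
            else 0) := by
            refine Finset.sum_congr rfl fun c _ => Finset.sum_congr rfl fun d _ => ?_
            by_cases hcd : c ≠ 0 ∧ d ≠ 0
            · obtain ⟨hc, hd⟩ := hcd
              rw [if_pos ⟨haz, mul_ne_zero haz hc, mul_ne_zero haz hd⟩, if_pos ⟨hc, hd⟩]
              have hb0eq : a ^ (k + 2) * (a * c)⁻¹ * ((a * d)⁻¹) ^ k * α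
                  = a * (α * c⁻¹ * (d⁻¹) ^ k) := by
                rw [mul_inv, mul_inv, mul_pow, inv_pow a k]
                field_simp
                ring
              rw [hb0eq, ← e_add hζ, ← e_add hζ, ← e_add hζ,
                show a + a * (α * c⁻¹ * (d⁻¹) ^ k) + a * c + a * d
                  = a * (1 + α * c⁻¹ * (d⁻¹) ^ k + c + d) by ring]
            · rw [if_neg hcd, if_neg (fun hh => hcd ⟨fun hc => hh.2.1 (by rw [hc, mul_zero]),
                fun hd => hh.2.2 (by rw [hd, mul_zero])⟩)]
  -- step 5: collapse the sum over a (Gauss sum twist)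
  have step5 : ∀ c d : ZMod p,
      (∑ a : ZMod p, (if c ≠ 0 ∧ d ≠ 0 then
          ((p : ℂ) - 1) * (φ (a * (α * c⁻¹ * (d⁻¹) ^ k)) *
            ζ ^ ((a * (1 + α * c⁻¹ * (d⁻¹) ^ k + c + d)).val))
        else 0))
      = if c ≠ 0 ∧ d ≠ 0 then
          (((p : ℂ) - 1) * gsum p ζ φ) *
            (φ (α * c⁻¹ * (d⁻¹) ^ k) * φ (1 + α * c⁻¹ * (d⁻¹) ^ k + c + d))
        else 0 := by
    intro c d
    by_cases hcd : c ≠ 0 ∧ d ≠ 0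
    · rw [if_pos hcd, Finset.sum_congr rfl fun a _ => if_pos hcd]
      have hpt : ∀ a : ZMod p,
          ((p : ℂ) - 1) * (φ (a * (α * c⁻¹ * (d⁻¹) ^ k)) *
            ζ ^ ((a * (1 + α * c⁻¹ * (d⁻¹) ^ k + c + d)).val))
          = (((p : ℂ) - 1) * φ (α * c⁻¹ * (d⁻¹) ^ k)) *
            (φ a * ζ ^ ((a * (1 + α * c⁻¹ * (d⁻¹) ^ k + c + d)).val)) := by
        intro a; rw [map_mul]; ring
      rw [Finset.sum_congr rfl fun a _ => hpt a, ← Finset.mul_sum,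
        gauss_twist hφ hp (1 + α * c⁻¹ * (d⁻¹) ^ k + c + d)]
      show _ = ((p : ℂ) - 1) * (∑ x : ZMod p, φ x * ζ ^ x.val) * _
      ring
    · rw [if_neg hcd, Finset.sum_eq_zero fun a _ => if_neg hcd]
  -- step 6: evaluate the inner sum over c for fixed d
  have h2z : (2 : ZMod p) ≠ 0 := by
    intro h
    have h' : ((2 : ℕ) : ZMod p) = 0 := by exact_mod_cast h
    rw [ZMod.natCast_eq_zero_iff] at h'
    exact p_ne_two hp ((Nat.prime_dvd_prime_iff_eq Fact.out Nat.prime_two).mp h')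
  have h4z : (4 : ZMod p) ≠ 0 := by
    intro h
    have h' : (2 : ZMod p) * 2 = 0 := by linear_combination h
    rcases mul_eq_zero.mp h' with h' | h' <;> exact h2z h'
  have step6 : ∀ d : ZMod p,
      (∑ c : ZMod p, (if c ≠ 0 ∧ d ≠ 0 then
          (((p : ℂ) - 1) * gsum p ζ φ) *
            (φ (α * c⁻¹ * (d⁻¹) ^ k) * φ (1 + α * c⁻¹ * (d⁻¹) ^ k + c + d))
        else 0))
      = if d ≠ 0 then
          (((p : ℂ) - 1) * gsum p ζ φ) *
            ((-(φ (α * (d⁻¹) ^ k)) - 1) +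
              (if d ≠ 0 ∧ (1 + d) ^ 2 = 4 * (α * (d⁻¹) ^ k) then (p : ℂ) else 0))
        else 0 := by
    intro d
    by_cases hd : d = 0
    · subst hd
      rw [if_neg (by simp), Finset.sum_eq_zero fun c _ => by
        rw [if_neg (fun hh => hh.2 rfl)]]
    · rw [if_pos hd]
      set β : ZMod p := α * (d⁻¹) ^ k with hβ
      have hβ0 : β ≠ 0 := mul_ne_zero hα0 (pow_ne_zero _ (inv_ne_zero hd))
      have hpt : ∀ c : ZMod p, (if c ≠ 0 ∧ d ≠ 0 then
            (((p : ℂ) - 1) * gsum p ζ φ) *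
              (φ (α * c⁻¹ * (d⁻¹) ^ k) * φ (1 + α * c⁻¹ * (d⁻¹) ^ k + c + d))
          else 0)
          = if c ≠ 0 then
              ((((p : ℂ) - 1) * gsum p ζ φ) * φ β) * φ (c ^ 2 + (1 + d) * c + β)
            else 0 := by
        intro c
        by_cases hc : c = 0
        · rw [if_neg (fun hh => hh.1 hc), if_neg (fun hh => hh hc)]
        · rw [if_pos ⟨hc, hd⟩, if_pos hc]
          have hmc : α * c⁻¹ * (d⁻¹) ^ k * c = β := by
            calc α * c⁻¹ * (d⁻¹) ^ k * c = α * (d⁻¹) ^ k * (c⁻¹ * c) := by ring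
              _ = α * (d⁻¹) ^ k := by rw [inv_mul_cancel₀ hc, mul_one]
              _ = β := hβ.symm
          have hsc : (1 + α * c⁻¹ * (d⁻¹) ^ k + c + d) * c = c ^ 2 + (1 + d) * c + β := by
            calc (1 + α * c⁻¹ * (d⁻¹) ^ k + c + d) * c
                = c + (α * c⁻¹ * (d⁻¹) ^ k * c) + c ^ 2 + d * c := by ring
              _ = c + β + c ^ 2 + d * c := by rw [hmc]
              _ = c ^ 2 + (1 + d) * c + β := by ring
          have key : φ (α * c⁻¹ * (d⁻¹) ^ k) * φ (1 + α * c⁻¹ * (d⁻¹) ^ k + c + d)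
              = φ β * φ (c ^ 2 + (1 + d) * c + β) := by
            calc φ (α * c⁻¹ * (d⁻¹) ^ k) * φ (1 + α * c⁻¹ * (d⁻¹) ^ k + c + d)
                = (φ (α * c⁻¹ * (d⁻¹) ^ k) * φ (1 + α * c⁻¹ * (d⁻¹) ^ k + c + d)) *
                    (φ c * φ c) := by rw [phi_sq hφ hc, mul_one]
              _ = (φ (α * c⁻¹ * (d⁻¹) ^ k) * φ c) *
                    (φ (1 + α * c⁻¹ * (d⁻¹) ^ k + c + d) * φ c) := by ring
              _ = φ (α * c⁻¹ * (d⁻¹) ^ k * c) *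
                    φ ((1 + α * c⁻¹ * (d⁻¹) ^ k + c + d) * c) := by rw [← map_mul, ← map_mul]
              _ = φ β * φ (c ^ 2 + (1 + d) * c + β) := by rw [hmc, hsc]
          rw [key]; ring
      rw [Finset.sum_congr rfl fun c _ => hpt c, sum_ite_ne_zero', ← Finset.mul_sum]
      rw [quad_sum hp hφ (1 + d) β]
      have hzero : (0 : ZMod p) ^ 2 + (1 + d) * 0 + β = β := by ring
      rw [hzero]
      have hcond : ((1 : ZMod p) * (1 + d) ^ 2 = 4 * β) ↔ (d ≠ 0 ∧ (1 + d) ^ 2 = 4 * β) := by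
        rw [one_mul]; exact ⟨fun h => ⟨hd, h⟩, fun h => h.2⟩
      by_cases hcnd : (1 : ZMod p) * (1 + d) ^ 2 = 4 * β
      · have h1d : (1 + d : ZMod p) ≠ 0 := by
          intro h0
          rw [one_mul, h0] at hcnd
          exact hβ0 (by
            have : (4 : ZMod p) * β = 0 := by rw [← hcnd]; ring
            rcases mul_eq_zero.mp this with h' | h'
            · exact absurd h' h4z
            · exact h')
        have hβsq : β = ((1 + d) * 2⁻¹) ^ 2 := by
          rw [one_mul] at hcnd
          field_simp
          linear_combination -hcnd
        have hφβ : φ β = 1 := by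
          rw [hβsq, sq, map_mul, phi_sq hφ (mul_ne_zero h1d (inv_ne_zero h2z))]
        rw [if_pos hcnd, if_pos (hcond.mp hcnd)]
        linear_combination (((p : ℂ) - 1) * gsum p ζ φ * ((p : ℂ) - 1 - φ β)) * hφβ
      · rw [if_neg hcnd, if_neg (fun hh => hcnd (hcond.mpr hh))]
        have hsq' : φ β * φ β = 1 := phi_sq hφ hβ0
        linear_combination (-((p : ℂ) - 1) * gsum p ζ φ) * hsq'
  -- assemble everything
  have EA : (∑ χ : MulChar (ZMod p) ℂ,
        gsum p ζ (χ ^ (k + 2)) * gsum p ζ (φ * χ⁻¹) * gsum p ζ χ⁻¹ *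
          gsum p ζ (χ⁻¹ ^ k) * χ α)
      = ∑ d : ZMod p, (if d ≠ 0 then
          (((p : ℂ) - 1) * gsum p ζ φ) *
            ((-(φ (α * (d⁻¹) ^ k)) - 1) +
              (if d ≠ 0 ∧ (1 + d) ^ 2 = 4 * (α * (d⁻¹) ^ k) then (p : ℂ) else 0))
        else 0) := by
    rw [step2]
    rw [Finset.sum_congr rfl fun d _ => Finset.sum_congr rfl fun c _ =>
      Finset.sum_congr rfl fun a _ => step3 a c d]
    rw [Finset.sum_comm]
    rw [Finset.sum_congr rfl fun c _ => Finset.sum_comm]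
    rw [Finset.sum_comm]
    rw [Finset.sum_congr rfl fun a _ => step4 a]
    rw [Finset.sum_comm]
    rw [Finset.sum_congr rfl fun c _ => Finset.sum_comm]
    rw [Finset.sum_congr rfl fun c _ => Finset.sum_congr rfl fun d _ => step5 c d]
    rw [Finset.sum_comm]
    exact Finset.sum_congr rfl fun d _ => step6 d
  have hsplit : ∀ d : ZMod p, (if d ≠ 0 then
        (((p : ℂ) - 1) * gsum p ζ φ) *
          ((-(φ (α * (d⁻¹) ^ k)) - 1) +
            (if d ≠ 0 ∧ (1 + d) ^ 2 = 4 * (α * (d⁻¹) ^ k) then (p : ℂ) else 0))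
      else 0)
      = (((p : ℂ) - 1) * gsum p ζ φ) *
          ((-(if d ≠ 0 then φ (α * (d⁻¹) ^ k) else 0))
            + (if d = 0 then (0 : ℂ) else (-1 : ℂ))
            + (if d ≠ 0 ∧ (1 + d) ^ 2 = 4 * (α * (d⁻¹) ^ k) then (p : ℂ) else 0)) := by
    intro d
    by_cases hd : d = 0
    · rw [if_neg (fun h => h hd), if_neg (fun h : d ≠ 0 => h hd), if_pos hd,
        if_neg (fun h => h.1 hd)]
      ring
    · rw [if_pos hd, if_pos hd, if_neg hd]
      ring
  have ED : (∑ d : ZMod p, (if d ≠ 0 then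
        (((p : ℂ) - 1) * gsum p ζ φ) *
          ((-(φ (α * (d⁻¹) ^ k)) - 1) +
            (if d ≠ 0 ∧ (1 + d) ^ 2 = 4 * (α * (d⁻¹) ^ k) then (p : ℂ) else 0))
      else 0))
      = (((p : ℂ) - 1) * gsum p ζ φ) *
          (-(φ α * (if φ ^ n = 1 then (p : ℂ) - 1 else 0)) + (-((p : ℂ) - 1))
            + (p : ℂ) * (r : ℂ)) := by
    rw [Finset.sum_congr rfl fun d _ => hsplit d, ← Finset.mul_sum,
      Finset.sum_add_distrib, Finset.sum_add_distrib]
    congr 1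
    have e1 : ∑ d : ZMod p, -(if d ≠ 0 then φ (α * (d⁻¹) ^ k) else 0)
        = -(φ α * (if φ ^ n = 1 then (p : ℂ) - 1 else 0)) := by
      rw [Finset.sum_neg_distrib, sum_phi_alpha_pow hp hφ hn hk2]
    have e2 : ∑ d : ZMod p, (if d = 0 then (0 : ℂ) else (-1 : ℂ)) = -((p : ℂ) - 1) := by
      calc ∑ d : ZMod p, (if d = 0 then (0 : ℂ) else (-1 : ℂ))
          = ∑ d : ZMod p, -(if d = 0 then (0 : ℂ) else 1) :=
            Finset.sum_congr rfl fun d _ => by split_ifs <;> ring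
        _ = -((p : ℂ) - 1) := by rw [Finset.sum_neg_distrib, sum_ind_units]
    have e3 : ∑ d : ZMod p, (if d ≠ 0 ∧ (1 + d) ^ 2 = 4 * (α * (d⁻¹) ^ k) then (p : ℂ) else 0)
        = (p : ℂ) * (r : ℂ) := by
      rw [Finset.sum_ite, Finset.sum_const, Finset.sum_const, smul_zero, add_zero,
        nsmul_eq_mul]
      have hc := count_lemma hp hk2 hk1 hα0
      rw [hr, hc]
      ring
    rw [e1, e2, e3]
  rw [EA, ED]
  have ht : (if φ ^ n = 1 then ((p : ℂ) - 1) else 0)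
      = ((p : ℂ) - 1) * (if φ ^ n = 1 then (1 : ℂ) else 0) := by split_ifs <;> ring
  rw [ht]
  ring
end
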